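/- arXiv:2308.02174 — 2 statements merged into one kernel-verified Lean document; each statement's English description precedes it below -/
import Mathlib

section
/- Let p, q, r be integers with p, q, r > 1 satisfying (r+1)/2 < p+q < r. Then (p+q)(r-1)/(r+1) > max{(p+q-1)(p+q)/(p+q+1), (r-1)/2}. -/
section LinearOrderedField

variable {K : Type*} [Field K] [LinearOrder K] [IsStrictOrderedRing K]

theorem sub_one_div_add_one_lt_sub_one_div_add_one {a b : K} (ha : -1 < a) (hab : a < b) :
    (a - 1) / (a + 1) < (b - 1) / (b + 1) := by
  rw [div_lt_div_iff₀ (by linarith) (by linarith)]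
  linarith

theorem sub_one_div_two_lt_mul_sub_one_div_add_one {r s : K} (hr : 1 < r)
    (hs : (r + 1) / 2 < s) : (r - 1) / 2 < s * (r - 1) / (r + 1) := by
  rw [div_lt_div_iff₀ two_pos (by linarith)]
  nlinarith

end LinearOrderedField

theorem stmt_3_general (p q r : ℤ)
    (h1 : ((r : ℝ) + 1) / 2 < (p : ℝ) + q) (h2 : p + q < r) :
    ((p : ℝ) + q) * (r - 1) / (r + 1) >
      max (((p : ℝ) + q - 1) * ((p : ℝ) + q) / ((p : ℝ) + q + 1)) (((r : ℝ) - 1) / 2) := by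
  have hsr : (p : ℝ) + q < r := by exact_mod_cast h2
  set s : ℝ := (p : ℝ) + q
  have hr : (1 : ℝ) < r := by linarith
  have hs : 0 < s := by linarith
  refine max_lt ?_ (sub_one_div_two_lt_mul_sub_one_div_add_one hr h1)
  calc (s - 1) * s / (s + 1) = s * ((s - 1) / (s + 1)) := by ring
    _ < s * ((r - 1) / (r + 1)) :=
      mul_lt_mul_of_pos_left (sub_one_div_add_one_lt_sub_one_div_add_one (by linarith) hsr) hs
    _ = s * (r - 1) / (r + 1) := by ring

theorem stmt_3 (p q r : ℤ) (hp : 1 < p) (hq : 1 < q) (hr : 1 < r)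
    (h1 : ((r : ℝ) + 1) / 2 < (p : ℝ) + q) (h2 : p + q < r) :
    ((p : ℝ) + q) * (r - 1) / (r + 1) >
      max (((p : ℝ) + q - 1) * ((p : ℝ) + q) / ((p : ℝ) + q + 1)) (((r : ℝ) - 1) / 2) :=
  stmt_3_general p q r h1 h2
end

section
/- Let β₀ ≥ 2 be an integer, p > 0 a real with (β₀+1)p < 1, and R ≥ 1. For (x,t) with t - x ≥ R and x ≥ 0 (and x + t ≥ R), the iterated integral ∫₀^t ∫_{x-t+s}^{x+t-s} (1+y+s)^{-(β₀+1)p} χ_D(y,s) dy ds, where χ_D is the indicator of D = {(y,s) : s - |y| ≥ R}, is bounded by C (t - x - R)(1+t+x)^{-(β₀+1)p+1} for some constant C depending only on β₀, p, R. -/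
/-!
In the null coordinates ξ = s + y, η = s - y the part of the backward light cone of (x, t)
lying in D = {s - |y| ≥ R} is the rectangle [R, x + t] × [R, t - x], the weight depends on ξ
alone and ds dy = dξ dη / 2. The integral is therefore exactly
(t - x - R) / 2 · ∫_R^{x+t} (1 + ξ)^(-q) dξ with q = (β₀ + 1) p, and since q < 1 the last
integral is at most (1 + x + t)^(1 - q) / (1 - q).
-/

open MeasureTheory Set

/-- Points (s, ξ) of the light cone in D, with ξ = s + y, so that 2s - ξ = s - y. -/
def nullConeRegion (R x t : ℝ) : Set (ℝ × ℝ) :=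
  {z | z.2 ∈ Icc R (x + t) ∧ 2 * z.1 - z.2 ∈ Ico R (t - x)}

section NullConeRegion

variable {R x t : ℝ}

theorem measurableSet_nullConeRegion : MeasurableSet (nullConeRegion R x t) :=
  (measurable_snd measurableSet_Icc).inter
    ((by fun_prop : Measurable fun z : ℝ × ℝ => 2 * z.1 - z.2) measurableSet_Ico)

theorem nullConeRegion_subset : nullConeRegion R x t ⊆ Icc R t ×ˢ Icc R (x + t) := by
  rintro ⟨s, ξ⟩ ⟨⟨hξR, hξ⟩, hηR, hη⟩
  exact ⟨⟨by linarith, by linarith⟩, hξR, hξ⟩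

theorem mk_mem_nullConeRegion_iff {s ξ : ℝ} :
    (s, ξ) ∈ nullConeRegion R x t ↔
      ξ ∈ Icc R (x + t) ∧ s ∈ Ico ((ξ + R) / 2) ((ξ + (t - x)) / 2) := by
  simp only [nullConeRegion, mem_ofPred_eq, mem_Icc, mem_Ico]
  constructor <;> rintro ⟨h₁, h₂, h₃⟩ <;> exact ⟨h₁, by linarith, by linarith⟩

variable {φ : ℝ → ℝ}

theorem integrable_nullConeRegion_indicator (hφ : IntegrableOn φ (Icc R (x + t))) :
    Integrable ((nullConeRegion R x t).indicator fun z => φ z.2) := by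
  set box := fun z : ℝ × ℝ => (Icc R t).indicator 1 z.1 * (Icc R (x + t)).indicator φ z.2
  have hbox : Integrable box :=
    ((integrableOn_const (C := (1 : ℝ)) measure_Icc_lt_top.ne).integrable_indicator
      measurableSet_Icc).mul_prod (hφ.integrable_indicator measurableSet_Icc)
  rw [indicator_congr (g := box) fun z hz => ?_]
  · exact hbox.indicator measurableSet_nullConeRegion
  · obtain ⟨hs, hξ⟩ := nullConeRegion_subset hz
    simp [box, indicator_of_mem hs, indicator_of_mem hξ]

theorem integral_lightCone_slice {s : ℝ} (hst : s ≤ t) :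
    ∫ y in (x - t + s)..(x + t - s), (if R ≤ s - |y| then φ (y + s) else 0) =
      ∫ ξ, (nullConeRegion R x t).indicator (fun z => φ z.2) (s, ξ) := by
  have hle : x - t + s + s ≤ x + t := by linarith
  have hmem : ∀ ξ, (ξ ∈ Ioc (x - t + s + s) (x + t) ∧ R ≤ s - |ξ - s|) ↔
      (s, ξ) ∈ nullConeRegion R x t := by
    intro ξ
    simp only [nullConeRegion, mem_ofPred_eq, mem_Icc, mem_Ico, mem_Ioc]
    constructor
    · rintro ⟨⟨h₁, h₂⟩, h₃⟩
      have := le_abs_self (ξ - s)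
      have := neg_abs_le (ξ - s)
      exact ⟨⟨by linarith, h₂⟩, by linarith, by linarith⟩
    · rintro ⟨⟨h₁, h₂⟩, h₃, h₄⟩
      have : |ξ - s| ≤ s - R := abs_le.mpr ⟨by linarith, by linarith⟩
      exact ⟨⟨by linarith, h₂⟩, by linarith⟩
  rw [show (fun y => if R ≤ s - |y| then φ (y + s) else 0) =
      fun y => (fun ξ => if R ≤ s - |ξ - s| then φ ξ else 0) (y + s) by
    simp only [add_sub_cancel_right],
    intervalIntegral.integral_comp_add_right (fun ξ => if R ≤ s - |ξ - s| then φ ξ else 0),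
    sub_add_cancel, intervalIntegral.integral_of_le hle, ← integral_indicator measurableSet_Ioc]
  congr 1
  ext ξ
  classical
  simp only [indicator_apply, ← ite_and]
  exact if_congr (hmem ξ) rfl rfl

theorem integral_nullConeRegion_indicator_fst (hRtx : R ≤ t - x) (ξ : ℝ) :
    ∫ s, (nullConeRegion R x t).indicator (fun z => φ z.2) (s, ξ) =
      (Icc R (x + t)).indicator φ ξ * ((t - x - R) / 2) := by
  have hslice : (fun s => (nullConeRegion R x t).indicator (fun z => φ z.2) (s, ξ)) =
      (Ico ((ξ + R) / 2) ((ξ + (t - x)) / 2)).indicator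
        fun _ => (Icc R (x + t)).indicator φ ξ := by
    ext s
    simp only [indicator, mk_mem_nullConeRegion_iff]
    by_cases hξ : ξ ∈ Icc R (x + t) <;>
      by_cases hs : s ∈ Ico ((ξ + R) / 2) ((ξ + (t - x)) / 2) <;> simp [hξ, hs]
  rw [hslice, integral_indicator_const _ measurableSet_Ico,
    Real.volume_real_Ico_of_le (by linarith), smul_eq_mul, mul_comm]
  ring_nf

theorem integral_lightCone_eq (hR : 0 ≤ R) (hRtx : R ≤ t - x) (hRxt : R ≤ x + t)
    (hφ : IntegrableOn φ (Icc R (x + t))) :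
    ∫ s in (0 : ℝ)..t, ∫ y in (x - t + s)..(x + t - s),
        (if R ≤ s - |y| then φ (y + s) else 0) =
      (t - x - R) / 2 * ∫ ξ in R..(x + t), φ ξ := by
  set G := (nullConeRegion R x t).indicator fun z => φ z.2
  have ht : 0 ≤ t := by linarith
  have hG_eq_zero : ∀ s ∉ Icc 0 t, ∀ ξ, G (s, ξ) = 0 := fun s hs ξ =>
    indicator_of_notMem (fun h => hs (Icc_subset_Icc_left hR (nullConeRegion_subset h).1)) _
  calc ∫ s in (0 : ℝ)..t, ∫ y in (x - t + s)..(x + t - s),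
        (if R ≤ s - |y| then φ (y + s) else 0)
      = ∫ s in (0 : ℝ)..t, ∫ ξ, G (s, ξ) :=
        intervalIntegral.integral_congr fun s hs =>
          integral_lightCone_slice ((uIcc_of_le ht ▸ hs).2)
    _ = ∫ s, ∫ ξ, G (s, ξ) := by
        rw [intervalIntegral.integral_of_le ht, ← integral_Icc_eq_integral_Ioc]
        exact setIntegral_eq_integral_of_forall_compl_eq_zero fun s hs => by
          simp [hG_eq_zero s hs]
    _ = ∫ ξ, ∫ s, G (s, ξ) :=
        integral_integral_swap (integrable_nullConeRegion_indicator hφ)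
    _ = ∫ ξ, (Icc R (x + t)).indicator φ ξ * ((t - x - R) / 2) := by
        simp only [G, integral_nullConeRegion_indicator_fst hRtx]
    _ = (t - x - R) / 2 * ∫ ξ in R..(x + t), φ ξ := by
        rw [integral_mul_const, integral_indicator measurableSet_Icc,
          integral_Icc_eq_integral_Ioc, ← intervalIntegral.integral_of_le hRxt, mul_comm]

end NullConeRegion

theorem integrableOn_one_add_rpow_Icc {q R a : ℝ} (hR : -1 < R) :
    IntegrableOn (fun ξ => (1 + ξ) ^ (-q)) (Icc R a) :=
  ContinuousOn.integrableOn_Icc fun ξ hξ =>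
    ((continuousAt_const.add continuousAt_id).rpow_const
      (Or.inl (show (1 : ℝ) + ξ ≠ 0 by linarith [hξ.1]))).continuousWithinAt

theorem integral_one_add_rpow_le {q R a : ℝ} (hq : q < 1) (hR : -1 ≤ R) :
    ∫ ξ in R..a, (1 + ξ) ^ (-q) ≤ (1 + a) ^ (1 - q) / (1 - q) := by
  have hq' : 0 < 1 - q := by linarith
  rw [intervalIntegral.integral_comp_add_left (fun ξ => ξ ^ (-q)),
    integral_rpow (Or.inl (by linarith)), neg_add_eq_sub]
  gcongr
  exact sub_le_self _ (Real.rpow_nonneg (by linarith) _)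

theorem stmt_10_general (β₀ : ℕ) (p R : ℝ)
    (hq : ((β₀ : ℝ) + 1) * p < 1) (hR : 1 ≤ R) :
    ∃ C > 0, ∀ x t : ℝ, 0 ≤ x → R ≤ t - x → R ≤ x + t →
      (∫ s in (0:ℝ)..t, ∫ y in (x - t + s)..(x + t - s),
          (if R ≤ s - |y| then (1 + y + s) ^ (-(((β₀ : ℝ) + 1) * p)) else 0)) ≤
        C * (t - x - R) * (1 + t + x) ^ (-(((β₀ : ℝ) + 1) * p) + 1) := by
  set q := ((β₀ : ℝ) + 1) * p
  have hq' : 0 < 1 - q := by linarith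
  refine ⟨1 / (2 * (1 - q)), by positivity, fun x t _ htx hxt => ?_⟩
  have hcone := integral_lightCone_eq (φ := fun ξ => (1 + ξ) ^ (-q)) (by linarith) htx hxt
    (integrableOn_one_add_rpow_Icc (by linarith))
  simp only [← add_assoc] at hcone
  rw [hcone]
  calc (t - x - R) / 2 * ∫ ξ in R..(x + t), (1 + ξ) ^ (-q)
      ≤ (t - x - R) / 2 * ((1 + (x + t)) ^ (1 - q) / (1 - q)) :=
        mul_le_mul_of_nonneg_left (integral_one_add_rpow_le hq (by linarith)) (by linarith)
    _ = 1 / (2 * (1 - q)) * (t - x - R) * (1 + t + x) ^ (-q + 1) := by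
        rw [neg_add_eq_sub, add_comm x t, ← add_assoc]
        field_simp

theorem stmt_10 (β₀ : ℕ) (hβ : 2 ≤ β₀) (p R : ℝ) (hp : 0 < p)
    (hq : ((β₀ : ℝ) + 1) * p < 1) (hR : 1 ≤ R) :
    ∃ C > 0, ∀ x t : ℝ, 0 ≤ x → R ≤ t - x → R ≤ x + t →
      (∫ s in (0:ℝ)..t, ∫ y in (x - t + s)..(x + t - s),
          (if R ≤ s - |y| then (1 + y + s) ^ (-(((β₀ : ℝ) + 1) * p)) else 0)) ≤
        C * (t - x - R) * (1 + t + x) ^ (-(((β₀ : ℝ) + 1) * p) + 1) :=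
  stmt_10_general β₀ p R hq hR
end
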